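/- For every n ≥ 1, the reduced subcomplex D*^{⊗̄n} ⊆ D*^{⊗n} has cohomology equal to a free rank-one k-module generated by 1⊗⋯⊗1 in degree 0 and equal to 0 in every degree i > 0; consequently the inclusion D*^{⊗̄n} ↪ D*^{⊗n} is a quasi-isomorphism of complexes. -/

import Mathlib

/-- Basis labels for the differential graded algebra `D*` over `k`:
`one` is the constant function `1` (degree 0), `Y s` is the Heaviside function
with singular support `{s}` (degree 0), and `om s` is the Dirac function with
singular support `{s}` (degree 1). -/
inductive DB : Type
  | one : DB
  | Y : ℤ → DB
  | om : ℤ → DB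
  deriving DecidableEq

/-- cohomological degree of a basis element -/
def DB.deg : DB → ℕ
  | .one => 0
  | .Y _ => 0
  | .om _ => 1

/-- singular support of a basis element -/
def DB.supp : DB → Finset ℤ
  | .one => ∅
  | .Y s => {s}
  | .om s => {s}

variable (k : Type) [CommRing k]

/-- The `n`-fold tensor power `D*^{⊗n}` of the complex `D*` over `k`, modelled as the
free `k`-module on the basis of decomposable tensors `f₁ ⊗ ⋯ ⊗ f_n` of basis elements. -/
abbrev Tot (n : ℕ) : Type := (Fin n → DB) →₀ k

/-- total (cohomological) degree of a basis tensor -/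
def degT {n : ℕ} (g : Fin n → DB) : ℕ := ∑ i, (g i).deg

/-- the homogeneous degree-`i` component of `D*^{⊗n}` -/
def homog (n i : ℕ) : Submodule k (Tot k n) where
  carrier := {x | ∀ g, x g ≠ 0 → degT g = i}
  add_mem' := by
    intro x y hx hy g hg
    by_cases h : x g = 0
    · refine hy g ?_
      intro h'; apply hg; simp [Finsupp.add_apply, h, h']
    · exact hx g h
  zero_mem' := by intro g hg; simp at hg
  smul_mem' := by
    intro c x hx g hg
    refine hx g fun h => hg ?_
    simp [Finsupp.smul_apply, h]

lemma mem_homog {n i : ℕ} {x : Tot k n} :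
    x ∈ homog k n i ↔ ∀ g, x g ≠ 0 → degT g = i := Iff.rfl

/-- `I` : the span of the basis tensors `f₀ ⊗ ⋯ ⊗ f_r` in which every factor is a
Heaviside or a Dirac function (no factor equals `1`). -/
def noOne (n : ℕ) : Submodule k (Tot k n) where
  carrier := {x | ∀ g, x g ≠ 0 → ∀ i, g i ≠ DB.one}
  add_mem' := by
    intro x y hx hy g hg
    by_cases h : x g = 0
    · refine hy g ?_
      intro h'; apply hg; simp [Finsupp.add_apply, h, h']
    · exact hx g h
  zero_mem' := by intro g hg; simp at hg
  smul_mem' := by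
    intro c x hx g hg
    refine hx g fun h => hg ?_
    simp [Finsupp.smul_apply, h]

lemma mem_noOne {n : ℕ} {x : Tot k n} :
    x ∈ noOne k n ↔ ∀ g, x g ≠ 0 → ∀ i, g i ≠ DB.one := Iff.rfl

/-- The Koszul-sign differential on a basis tensor:
`d(f₁ ⊗ ⋯ ⊗ f_n) = Σ_i (-1)^{deg f₁ + ⋯ + deg f_{i-1}} f₁ ⊗ ⋯ ⊗ d f_i ⊗ ⋯ ⊗ f_n`,
where `d(Y s) = - ω_s`, `d 1 = 0`, `d (ω s) = 0`. -/
noncomputable def dB {n : ℕ} (g : Fin n → DB) : Tot k n :=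
  ∑ i : Fin n,
    match g i with
    | DB.Y s =>
        Finsupp.single (Function.update g i (DB.om s))
          (-(-1 : k) ^ (∑ j ∈ Finset.univ.filter (fun j : Fin n => j < i), (g j).deg))
    | _ => (0 : Tot k n)

/-- the total differential of the complex `D*^{⊗n}` (it raises degree by one) -/
noncomputable def dT (n : ℕ) : Tot k n →ₗ[k] Tot k n :=
  Finsupp.linearCombination k (dB k (n := n))

/-- The reduced subcomplex `D*^{⊗̄n} ⊆ D*^{⊗n}` : the span of the basis tensors
`f₁ ⊗ ⋯ ⊗ f_n` whose factors have pairwise disjoint singular supports. -/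
def reduced (n : ℕ) : Submodule k (Tot k n) where
  carrier := {x | ∀ g, x g ≠ 0 → ∀ i j : Fin n, i ≠ j → Disjoint ((g i).supp) ((g j).supp)}
  add_mem' := by
    intro x y hx hy g hg
    by_cases h : x g = 0
    · refine hy g ?_
      intro h'; apply hg; simp [Finsupp.add_apply, h, h']
    · exact hx g h
  zero_mem' := by intro g hg; simp at hg
  smul_mem' := by
    intro c x hx g hg
    refine hx g fun h => hg ?_
    simp [Finsupp.smul_apply, h]

lemma mem_reduced {n : ℕ} {x : Tot k n} :
    x ∈ reduced k n ↔
      ∀ g, x g ≠ 0 → ∀ i j : Fin n, i ≠ j → Disjoint ((g i).supp) ((g j).supp) := Iff.rfl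

/-!
On `D*` the degree `-1` map `h` with `h ω_s = -Y_s`, `h Y_s = h 1 = 0` satisfies
`dh + hd = 1 - π`, where `π` is the projection onto `k·1`. Peeling off the first tensor factor,
`H = h ⊗ 1 + π ⊗ H'` is then a homotopy on `D*^{⊗n}` with `dH + Hd = 1 - π^{⊗n}`
(the Koszul signs cancel because `h` lowers degree by one). `H` only replaces one Dirac factor
`ω_s` by `Y_s`, so it keeps every singular support and lowers the degree: it preserves the
reduced subcomplex, on which it contracts everything onto `k·(1 ⊗ ⋯ ⊗ 1)`.
-/

theorem Finsupp.exists_apply_ne_zero_of_map_apply_ne_zero {α β R : Type*} [Semiring R]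
    (f : (α →₀ R) →ₗ[R] (β →₀ R)) {x : α →₀ R} {b : β} (h : f x b ≠ 0) :
    ∃ a, x a ≠ 0 ∧ f (Finsupp.single a 1) b ≠ 0 := by
  rw [← Finsupp.sum_single x, map_finsuppSum, Finsupp.sum, Finsupp.finsetSum_apply] at h
  obtain ⟨a, -, ha⟩ := Finset.exists_ne_zero_of_sum_ne_zero h
  rw [← Finsupp.smul_single_one, map_smul, Finsupp.smul_apply, smul_eq_mul] at ha
  exact ⟨a, left_ne_zero_of_mul ha, right_ne_zero_of_mul ha⟩

section Homotopy

variable {k}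

noncomputable def consMap {n : ℕ} (a : DB) : Tot k n →ₗ[k] Tot k (n + 1) :=
  Finsupp.lmapDomain k k (fun g : Fin n → DB => Fin.cons a g)

theorem consMap_single {n : ℕ} (a : DB) (g : Fin n → DB) (c : k) :
    consMap a (Finsupp.single g c) = Finsupp.single (Fin.cons a g) c :=
  Finsupp.mapDomain_single

theorem consMap_apply_ne_zero {n : ℕ} {a : DB} {x : Tot k n} {h : Fin (n + 1) → DB}
    (hx : consMap a x h ≠ 0) : ∃ h', h = Fin.cons a h' ∧ x h' ≠ 0 := by
  by_cases hh : h ∈ Set.range (fun h' : Fin n → DB => (Fin.cons a h' : Fin (n + 1) → DB))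
  · obtain ⟨h', rfl⟩ := hh
    exact ⟨h', rfl, by rwa [consMap, Finsupp.lmapDomain_apply,
      Finsupp.mapDomain_apply (Fin.cons_right_injective (α := fun _ => DB) a)] at hx⟩
  · exact absurd (Finsupp.mapDomain_of_notMem_range _ _ hh) hx

theorem consMap_apply_cons {n : ℕ} (a : DB) (x : Tot k n) (h : Fin n → DB) :
    consMap a x (Fin.cons a h) = x h :=
  Finsupp.mapDomain_apply (Fin.cons_right_injective (α := fun _ => DB) a) x h

theorem consMap_one_apply_one {n : ℕ} (x : Tot k n) :
    consMap .one x (fun _ => .one) = x (fun _ => .one) := by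
  rw [show (fun _ : Fin (n + 1) => DB.one) = Fin.cons DB.one (fun _ => DB.one) from
    (Fin.cons_self_tail _).symm, consMap_apply_cons]

theorem consMap_apply_one_of_ne {n : ℕ} {a : DB} (ha : a ≠ .one) (x : Tot k n) :
    consMap a x (fun _ => .one) = 0 := by
  by_contra hx
  obtain ⟨h, hh, -⟩ := consMap_apply_ne_zero hx
  exact ha (by simpa using (congrFun hh 0).symm)

theorem consMap_single_one {n : ℕ} :
    consMap .one (Finsupp.single (fun _ : Fin n => DB.one) (1 : k)) =
      Finsupp.single (fun _ => .one) 1 := by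
  rw [consMap_single, ← Fin.cons_self_tail (fun _ : Fin (n + 1) => DB.one)]
  rfl

theorem dT_single {n : ℕ} (g : Fin n → DB) (c : k) :
    dT k n (Finsupp.single g c) = c • dB k g :=
  Finsupp.linearCombination_single k c g

theorem sum_deg_cons_lt_succ {n : ℕ} (a : DB) (g : Fin n → DB) (i : Fin n) :
    ∑ j ∈ Finset.univ.filter (fun j : Fin (n + 1) => j < i.succ),
        ((Fin.cons a g : Fin (n + 1) → DB) j).deg
      = a.deg + ∑ j ∈ Finset.univ.filter (fun j : Fin n => j < i), (g j).deg := by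
  simp only [Finset.sum_filter, Fin.sum_univ_succ, Fin.cons_zero, Fin.cons_succ,
    Fin.succ_lt_succ_iff, if_pos (Fin.succ_pos i)]

theorem dB_cons {n : ℕ} (a : DB) (g : Fin n → DB) :
    dB k (Fin.cons a g : Fin (n + 1) → DB) =
      (match a with
        | .Y s => -Finsupp.single (Fin.cons (DB.om s) g) 1
        | _ => 0) + (-1 : k) ^ a.deg • consMap a (dB k g) := by
  rw [dB, Fin.sum_univ_succ, dB, map_sum, Finset.smul_sum]
  congr 1
  · cases a <;> simp [Fin.update_cons_zero]
  · refine Finset.sum_congr rfl fun i _ => ?_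
    rw [Fin.cons_succ, sum_deg_cons_lt_succ]
    cases g i <;> simp [consMap_single, Fin.cons_update, pow_add]

theorem dT_consMap_one {n : ℕ} (x : Tot k n) :
    dT k (n + 1) (consMap .one x) = consMap .one (dT k n x) := by
  induction x using Finsupp.induction_linear with
  | zero => simp
  | add x y hx hy => simp only [map_add, hx, hy]
  | single g c => simp [consMap_single, dT_single, dB_cons, DB.deg]

theorem dT_consMap_Y {n : ℕ} (s : ℤ) (x : Tot k n) :
    dT k (n + 1) (consMap (.Y s) x) = -consMap (.om s) x + consMap (.Y s) (dT k n x) := by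
  induction x using Finsupp.induction_linear with
  | zero => simp
  | add x y hx hy => simp only [map_add, hx, hy]; abel
  | single g c => simp [consMap_single, dT_single, dB_cons, DB.deg]

theorem dT_consMap_om {n : ℕ} (s : ℤ) (x : Tot k n) :
    dT k (n + 1) (consMap (.om s) x) = -consMap (.om s) (dT k n x) := by
  induction x using Finsupp.induction_linear with
  | zero => simp
  | add x y hx hy => simp only [map_add, hx, hy, neg_add]
  | single g c => simp [consMap_single, dT_single, dB_cons, DB.deg]

variable (k) in
noncomputable def htpy : (n : ℕ) → Tot k n →ₗ[k] Tot k n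
  | 0 => 0
  | n + 1 => Finsupp.linearCombination k fun g =>
      match g 0 with
      | .one => consMap .one (htpy n (Finsupp.single (Fin.tail g) 1))
      | .Y _ => 0
      | .om s => -Finsupp.single (Fin.cons (.Y s) (Fin.tail g)) 1

theorem htpy_single_cons {n : ℕ} (a : DB) (g : Fin n → DB) (c : k) :
    htpy k (n + 1) (Finsupp.single (Fin.cons a g) c) =
      c • (match a with
        | .one => consMap .one (htpy k n (Finsupp.single g 1))
        | .Y _ => 0
        | .om s => -Finsupp.single (Fin.cons (.Y s) g) 1) := by
  rw [htpy, Finsupp.linearCombination_single, Fin.cons_zero, Fin.tail_cons]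

theorem htpy_consMap_one {n : ℕ} (x : Tot k n) :
    htpy k (n + 1) (consMap .one x) = consMap .one (htpy k n x) := by
  induction x using Finsupp.induction_linear with
  | zero => simp
  | add x y hx hy => simp only [map_add, hx, hy]
  | single g c =>
    rw [consMap_single, htpy_single_cons, ← map_smul, ← map_smul, Finsupp.smul_single_one]

theorem htpy_consMap_Y {n : ℕ} (s : ℤ) (x : Tot k n) :
    htpy k (n + 1) (consMap (.Y s) x) = 0 := by
  induction x using Finsupp.induction_linear with
  | zero => simp
  | add x y hx hy => simp only [map_add, hx, hy, add_zero]
  | single g c => rw [consMap_single, htpy_single_cons, smul_zero]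

theorem htpy_consMap_om {n : ℕ} (s : ℤ) (x : Tot k n) :
    htpy k (n + 1) (consMap (.om s) x) = -consMap (.Y s) x := by
  induction x using Finsupp.induction_linear with
  | zero => simp
  | add x y hx hy => simp only [map_add, hx, hy, neg_add]
  | single g c => simp [consMap_single, htpy_single_cons]

theorem dT_htpy_add_htpy_dT (n : ℕ) (x : Tot k n) :
    dT k n (htpy k n x) + htpy k n (dT k n x) =
      x - x (fun _ => .one) • Finsupp.single (fun _ => .one) 1 := by
  induction n with
  | zero =>
    rw [htpy, LinearMap.zero_apply, LinearMap.zero_apply, map_zero, add_zero, eq_comm,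
      sub_eq_zero, Finsupp.smul_single_one]
    refine Finsupp.ext fun g => ?_
    rw [Subsingleton.elim g (fun _ => DB.one)]
    simp
  | succ n ih =>
    induction x using Finsupp.induction_linear with
    | zero => simp
    | add x y hx hy =>
      simp only [map_add, Finsupp.add_apply, add_smul] at hx hy ⊢
      rw [← sub_add_sub_comm, ← hx, ← hy]
      abel
    | single g c =>
      rw [← Fin.cons_self_tail g, ← consMap_single]
      generalize Finsupp.single (Fin.tail g) c = y
      cases g 0 with
      | one =>
        rw [htpy_consMap_one, dT_consMap_one, dT_consMap_one, htpy_consMap_one, ← map_add, ih,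
          map_sub, map_smul, consMap_single_one, consMap_one_apply_one]
      | Y s =>
        rw [htpy_consMap_Y, dT_consMap_Y, map_add, map_neg, htpy_consMap_om, htpy_consMap_Y,
          consMap_apply_one_of_ne DB.noConfusion]
        simp
      | om s =>
        rw [htpy_consMap_om, dT_consMap_om, map_neg, dT_consMap_Y, map_neg, htpy_consMap_om,
          consMap_apply_one_of_ne DB.noConfusion]
        simp

theorem htpy_single_apply_ne_zero {n : ℕ} {g h : Fin n → DB}
    (hne : htpy k n (Finsupp.single g 1) h ≠ 0) :
    ∃ j s, g j = .om s ∧ h = Function.update g j (.Y s) := by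
  induction n with
  | zero => simp [htpy] at hne
  | succ n ih =>
    obtain ⟨a, g, rfl⟩ : ∃ a g', g = Fin.cons a g' := ⟨_, _, (Fin.cons_self_tail g).symm⟩
    rw [htpy_single_cons, one_smul] at hne
    cases a with
    | one =>
      obtain ⟨h, rfl, hh⟩ := consMap_apply_ne_zero hne
      obtain ⟨j, s, hj, rfl⟩ := ih hh
      exact ⟨j.succ, s, hj, Fin.cons_update _ _ _ _⟩
    | Y s => simp at hne
    | om s =>
      rw [Finsupp.neg_apply, neg_ne_zero, Finsupp.single_apply_ne_zero] at hne
      exact ⟨0, s, rfl, by rw [hne.1, Fin.update_cons_zero]⟩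

theorem htpy_apply_ne_zero {n : ℕ} {x : Tot k n} {h : Fin n → DB} (hne : htpy k n x h ≠ 0) :
    ∃ g, x g ≠ 0 ∧ ∃ j s, g j = .om s ∧ h = Function.update g j (.Y s) := by
  obtain ⟨g, hg, hgh⟩ := Finsupp.exists_apply_ne_zero_of_map_apply_ne_zero _ hne
  exact ⟨g, hg, htpy_single_apply_ne_zero hgh⟩

theorem supp_update_Y {n : ℕ} {g : Fin n → DB} {j : Fin n} {s : ℤ} (hg : g j = .om s)
    (i : Fin n) : (Function.update g j (.Y s) i).supp = (g i).supp := by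
  rcases eq_or_ne i j with rfl | hij
  · rw [Function.update_self, hg]; rfl
  · rw [Function.update_of_ne hij]

theorem degT_update_Y {n : ℕ} {g : Fin n → DB} {j : Fin n} {s : ℤ} (hg : g j = .om s) :
    degT (Function.update g j (.Y s)) + 1 = degT g := by
  unfold degT
  rw [← Finset.add_sum_erase _ _ (Finset.mem_univ j),
    ← Finset.add_sum_erase _ (fun i => (g i).deg) (Finset.mem_univ j), Function.update_self, hg,
    Finset.sum_congr rfl fun i hi => by rw [Function.update_of_ne (Finset.ne_of_mem_erase hi)]]
  simp only [DB.deg]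
  omega

theorem htpy_mem_reduced {n : ℕ} {x : Tot k n} (hx : x ∈ reduced k n) :
    htpy k n x ∈ reduced k n := by
  intro h hh
  obtain ⟨g, hg, j, s, hj, rfl⟩ := htpy_apply_ne_zero hh
  simpa only [supp_update_Y hj] using hx g hg

theorem htpy_mem_homog {n i : ℕ} {x : Tot k n} (hx : x ∈ homog k n (i + 1)) :
    htpy k n x ∈ homog k n i := by
  intro h hh
  obtain ⟨g, hg, j, s, hj, rfl⟩ := htpy_apply_ne_zero hh
  have := degT_update_Y hj
  have := hx g hg
  omega

theorem htpy_eq_zero_of_mem_homog_zero {n : ℕ} {x : Tot k n} (hx : x ∈ homog k n 0) :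
    htpy k n x = 0 := by
  refine Finsupp.ext fun h => by_contra fun hh => ?_
  obtain ⟨g, hg, j, s, hj, -⟩ := htpy_apply_ne_zero hh
  have := degT_update_Y hj
  have := hx g hg
  omega

theorem dB_apply_one {n : ℕ} (g : Fin n → DB) : dB k g (fun _ => .one) = 0 := by
  rw [dB, Finsupp.finsetSum_apply]
  refine Finset.sum_eq_zero fun i _ => ?_
  split
  · rw [Finsupp.single_apply, if_neg fun h => by simpa using congrFun h i]
  · rfl

theorem dT_apply_one {n : ℕ} (x : Tot k n) : dT k n x (fun _ => .one) = 0 := by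
  by_contra hx
  obtain ⟨g, -, hg⟩ := Finsupp.exists_apply_ne_zero_of_map_apply_ne_zero _ hx
  rw [dT_single, one_smul, dB_apply_one] at hg
  exact hg rfl

theorem single_one_mem_reduced {n : ℕ} :
    Finsupp.single (fun _ : Fin n => DB.one) (1 : k) ∈ reduced k n := by
  intro g hg i j _
  rw [(Finsupp.single_apply_ne_zero.1 hg).1]
  exact Finset.disjoint_empty_left _

theorem degT_one {n : ℕ} : degT (fun _ : Fin n => DB.one) = 0 :=
  Finset.sum_eq_zero fun _ _ => rfl

theorem single_one_mem_homog_zero {n : ℕ} :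
    Finsupp.single (fun _ : Fin n => DB.one) (1 : k) ∈ homog k n 0 := by
  intro g hg
  rw [(Finsupp.single_apply_ne_zero.1 hg).1, degT_one]

theorem apply_one_eq_zero_of_mem_homog_succ {n i : ℕ} {x : Tot k n}
    (hx : x ∈ homog k n (i + 1)) : x (fun _ => .one) = 0 :=
  by_contra fun h => absurd (hx _ h) (by rw [degT_one]; omega)

theorem dT_single_one {n : ℕ} : dT k n (Finsupp.single (fun _ => DB.one) 1) = 0 := by
  rw [dT_single, one_smul]
  exact Finset.sum_eq_zero fun _ _ => rfl

end Homotopy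

theorem statement4_general (k : Type) [CommRing k] (n : ℕ) :
    -- `1 ⊗ ⋯ ⊗ 1` is a degree-0 cocycle of the reduced subcomplex
    (Finsupp.single (fun _ : Fin n => DB.one) (1 : k) ∈ reduced k n ⊓ homog k n 0 ∧
      dT k n (Finsupp.single (fun _ : Fin n => DB.one) (1 : k)) = 0) ∧
    -- it generates a free rank-one `k`-module
    Function.Injective (fun c : k => c • Finsupp.single (fun _ : Fin n => DB.one) (1 : k)) ∧
    -- `H⁰` of the reduced subcomplex is generated by `1 ⊗ ⋯ ⊗ 1`
    (∀ z ∈ reduced k n ⊓ homog k n 0, dT k n z = 0 →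
        ∃ c : k, z = c • Finsupp.single (fun _ : Fin n => DB.one) (1 : k)) ∧
    -- `H^i` of the reduced subcomplex vanishes for `i > 0`
    (∀ i : ℕ, ∀ z ∈ reduced k n ⊓ homog k n (i + 1), dT k n z = 0 →
        ∃ w ∈ reduced k n ⊓ homog k n i, dT k n w = z) ∧
    -- the inclusion is surjective on cohomology …
    (∀ i : ℕ, ∀ z ∈ homog k n i, dT k n z = 0 →
        ∃ w ∈ reduced k n ⊓ homog k n i, dT k n w = 0 ∧ ∃ u : Tot k n, z - w = dT k n u) ∧
    -- … and injective on cohomology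
    (∀ i : ℕ, ∀ w ∈ reduced k n ⊓ homog k n i, dT k n w = 0 →
        (∃ u : Tot k n, dT k n u = w) → ∃ u' ∈ reduced k n, dT k n u' = w) := by
  have homotopy := dT_htpy_add_htpy_dT (k := k) n
  refine ⟨⟨⟨single_one_mem_reduced, single_one_mem_homog_zero⟩, dT_single_one⟩,
    ?_, ?_, ?_, ?_, ?_⟩
  · intro a b hab
    simpa using congrArg (fun x : Tot k n => x fun _ => DB.one) hab
  · intro z hz hdz
    refine ⟨z fun _ => .one, sub_eq_zero.1 ?_⟩
    simpa [htpy_eq_zero_of_mem_homog_zero hz.2, hdz] using (homotopy z).symm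
  · intro i z hz hdz
    refine ⟨htpy k n z, ⟨htpy_mem_reduced hz.1, htpy_mem_homog hz.2⟩, ?_⟩
    simpa [hdz, apply_one_eq_zero_of_mem_homog_succ hz.2] using homotopy z
  · intro i z hz hdz
    refine ⟨(z fun _ => .one) • Finsupp.single (fun _ => .one) 1,
      ⟨Submodule.smul_mem _ _ single_one_mem_reduced, ?_⟩,
      by rw [map_smul, dT_single_one, smul_zero],
      htpy k n z, by simpa [hdz] using (homotopy z).symm⟩
    cases i with
    | zero => exact Submodule.smul_mem _ _ single_one_mem_homog_zero
    | succ i => simp [apply_one_eq_zero_of_mem_homog_succ hz]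
  · rintro i w hw hdw ⟨u, rfl⟩
    exact ⟨htpy k n (dT k n u), htpy_mem_reduced hw.1,
      by simpa [hdw, dT_apply_one] using homotopy (dT k n u)⟩

/-- For every `n ≥ 1`, the reduced subcomplex `D*^{⊗̄n} ⊆ D*^{⊗n}` has
cohomology equal to a free rank-one `k`-module generated by `1 ⊗ ⋯ ⊗ 1` in degree `0`
and equal to `0` in every degree `i > 0`; consequently the inclusion
`D*^{⊗̄n} ↪ D*^{⊗n}` is a quasi-isomorphism (bijective on cohomology in every degree). -/
theorem statement4 (k : Type) [CommRing k] (n : ℕ) (hn : 1 ≤ n) :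
    -- `1 ⊗ ⋯ ⊗ 1` is a degree-0 cocycle of the reduced subcomplex
    (Finsupp.single (fun _ : Fin n => DB.one) (1 : k) ∈ reduced k n ⊓ homog k n 0 ∧
      dT k n (Finsupp.single (fun _ : Fin n => DB.one) (1 : k)) = 0) ∧
    -- it generates a free rank-one `k`-module
    Function.Injective (fun c : k => c • Finsupp.single (fun _ : Fin n => DB.one) (1 : k)) ∧
    -- `H⁰` of the reduced subcomplex is generated by `1 ⊗ ⋯ ⊗ 1`
    (∀ z ∈ reduced k n ⊓ homog k n 0, dT k n z = 0 →
        ∃ c : k, z = c • Finsupp.single (fun _ : Fin n => DB.one) (1 : k)) ∧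
    -- `H^i` of the reduced subcomplex vanishes for `i > 0`
    (∀ i : ℕ, ∀ z ∈ reduced k n ⊓ homog k n (i + 1), dT k n z = 0 →
        ∃ w ∈ reduced k n ⊓ homog k n i, dT k n w = z) ∧
    -- the inclusion is surjective on cohomology …
    (∀ i : ℕ, ∀ z ∈ homog k n i, dT k n z = 0 →
        ∃ w ∈ reduced k n ⊓ homog k n i, dT k n w = 0 ∧ ∃ u : Tot k n, z - w = dT k n u) ∧
    -- … and injective on cohomology
    (∀ i : ℕ, ∀ w ∈ reduced k n ⊓ homog k n i, dT k n w = 0 →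
        (∃ u : Tot k n, dT k n u = w) → ∃ u' ∈ reduced k n, dT k n u' = w) :=
  statement4_general k n
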